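/- Given the SAE-CNN gradient update D_{L,c}^{(k+1)} = D_{L,c}^{(k)} + η Pᵀ r^{(k)} ⋆ z_c applied channelwise, where r^{(k)} = x - P(Σ_i D_{L,i}^{(k)} * z_i), the effective kernels D_c^{(k)} = P D_{L,c}^{(k)} satisfy D_c^{(k+1)} = D_c^{(k)} + η (P Pᵀ)(x - Σ_i D_i^{(k)} * z_i) ⋆ z_c, where P acts on the channel dimension and commutes with spatial convolution and correlation. -/
import Mathlib


open Matrix


private lemma mulVec_sum' {α m' h' : Type*} [Fintype h'] [NonUnitalNonAssocSemiring α]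
    {ι : Type*} (t : Finset ι) (A : Matrix m' h' α) (f : ι → h' → α) :
    A *ᵥ (∑ i ∈ t, f i) = ∑ i ∈ t, A *ᵥ f i := by
  ext j
  simp only [Matrix.mulVec, dotProduct, Finset.sum_apply, Finset.mul_sum]
  exact Finset.sum_comm

/-- Training dynamics of lifted SAE-CNN: left-multiplying the channelwise lifted update
`D_{L,c}⁺(s) = D_{L,c}(s) + η (Pᵀ r) ⋆ z_c (s)`, where
`r(t) = x(t) - P (Σ_i D_{L,i} * z_i)(t)`, by `P` yields the effective update
`D_c⁺ = D_c + η (P Pᵀ)(x - Σ_i D_i * z_i) ⋆ z_c` for `D_c = P D_{L,c}`. -/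
theorem lifted_saecnn_effective_update {n C m h : ℕ} [NeZero n]
    (P : Matrix (Fin m) (Fin h) ℝ)
    (DL DL' : Fin C → ZMod n → (Fin h → ℝ))
    (z : Fin C → ZMod n → ℝ) (x : ZMod n → (Fin m → ℝ)) (η : ℝ)
    (r : ZMod n → (Fin m → ℝ))
    (hr : r = fun t => x t - P *ᵥ (∑ i, ∑ s : ZMod n, z i (t - s) • DL i s))
    (hupd : ∀ c s, DL' c s = DL c s + η • ∑ t : ZMod n, z c t • (Pᵀ *ᵥ r (t + s))) :
    ∀ c s, P *ᵥ DL' c s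
      = P *ᵥ DL c s
        + η • ∑ t : ZMod n, z c t •
            ((P * Pᵀ) *ᵥ (x (t + s) - ∑ i, ∑ u : ZMod n, z i (t + s - u) • (P *ᵥ DL i u))) := by
  intro c s
  subst hr
  rw [hupd]
  simp only [mulVec_add, mulVec_smul, mulVec_sum', mulVec_mulVec, mulVec_sub]
  simp only [Matrix.mul_assoc]
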